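/- (Theorem 2, Algorithm 1 convergence.) Assume A_q = exp(hH) and that Q − P + A_qᵀ P A_q is negative definite. Let x_q, r : ℕ → ℝ^n and Ũ*(k) ∈ 𝒰^N be sequences such that for every k: x_q(k+1) = A_q x_q(k) + h B_q ũ*_0(k) where ũ*_0(k) is the first element of Ũ*(k); r(k+1) = exp(hH) r(k); and J(x_q(k+1), r(k+1), Ũ*(k+1)) ≤ J(x_q(k+1), r(k+1), Û(k+1)), where Û(k+1) is the shifted sequence obtained from Ũ*(k) by dropping its first element and appending the zero vector. Then the sequence k ↦ J(x_q(k), r(k), Ũ*(k)) is non-increasing, and the tracking error satisfies ‖x_q(k) − r(k)‖ → 0 as k → ∞. -/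

import Mathlib

open Matrix Filter Topology

/-- Predicted states of the quantized system: `x₀ = x`, `x_{i+1} = A_q x_i + h B_q u_i`
(inputs beyond the horizon are taken to be `0`). -/
noncomputable def predState {n m N : ℕ} (Aq : Matrix (Fin n) (Fin n) ℝ)
    (Bq : Matrix (Fin n) (Fin m) ℝ) (h : ℝ) (x : Fin n → ℝ)
    (U : Fin N → Fin m → ℝ) : ℕ → (Fin n → ℝ)
  | 0 => x
  | i + 1 => Aq *ᵥ (predState Aq Bq h x U i) +
      h • (Bq *ᵥ (if hi : i < N then U ⟨i, hi⟩ else 0))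

/-- Reference states: `r_i = (exp (h H))^i r`. -/
noncomputable def refState {n : ℕ} (H : Matrix (Fin n) (Fin n) ℝ) (h : ℝ)
    (r : Fin n → ℝ) (i : ℕ) : Fin n → ℝ :=
  ((NormedSpace.exp (h • H)) ^ i) *ᵥ r

/-- The MPC cost
`J(x, r, U) = (x_N - r_N)ᵀ P (x_N - r_N) + Σ_{i<N} [(x_i - r_i)ᵀ Q (x_i - r_i) + u_iᵀ R u_i]`. -/
noncomputable def mpcCost {n m N : ℕ} (Aq : Matrix (Fin n) (Fin n) ℝ)
    (Bq : Matrix (Fin n) (Fin m) ℝ) (H : Matrix (Fin n) (Fin n) ℝ) (h : ℝ)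
    (P Q : Matrix (Fin n) (Fin n) ℝ) (R : Matrix (Fin m) (Fin m) ℝ)
    (x r : Fin n → ℝ) (U : Fin N → Fin m → ℝ) : ℝ :=
  (predState Aq Bq h x U N - refState H h r N) ⬝ᵥ
      (P *ᵥ (predState Aq Bq h x U N - refState H h r N)) +
    ∑ i : Fin N,
      ((predState Aq Bq h x U i - refState H h r i) ⬝ᵥ
          (Q *ᵥ (predState Aq Bq h x U i - refState H h r i)) +
        (U i) ⬝ᵥ (R *ᵥ (U i)))

/-- The quantized input set `𝒰^N` with `𝒰 = {-1,0,1}^m`. -/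
def quantSet (m N : ℕ) : Set (Fin N → Fin m → ℝ) :=
  {U | ∀ i j, U i j = -1 ∨ U i j = 0 ∨ U i j = 1}

/-- The value function `V(x,r) = min_{U ∈ 𝒰^N} J(x,r,U)`. -/
noncomputable def valueFn {n m N : ℕ} (Aq : Matrix (Fin n) (Fin n) ℝ)
    (Bq : Matrix (Fin n) (Fin m) ℝ) (H : Matrix (Fin n) (Fin n) ℝ) (h : ℝ)
    (P Q : Matrix (Fin n) (Fin n) ℝ) (R : Matrix (Fin m) (Fin m) ℝ)
    (x r : Fin n → ℝ) : ℝ :=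
  sInf ((fun U => mpcCost Aq Bq H h P Q R x r U) '' quantSet m N)

/-- The shifted input sequence: drop `u₀` and append `0`. -/
def shiftSeq {m N : ℕ} (U : Fin N → Fin m → ℝ) : Fin N → Fin m → ℝ :=
  fun i => if hi : (i : ℕ) + 1 < N then U ⟨(i : ℕ) + 1, hi⟩ else 0

/-!
Shifting an input sequence (drop `u₀`, append `0`) moves the predicted trajectory one step
forward; its new last state is `A_q x_N`, and since `A_q = exp (h H)` the reference moves in
the same way, so the new terminal error is `A_q e_N`. Comparing the two costs term by term gives
`J(shifted) = J - e₀ᵀ Q e₀ - u₀ᵀ R u₀ + e_Nᵀ (Q - P + A_qᵀ P A_q) e_N ≤ J - e₀ᵀ Q e₀`.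
Hence the (nonnegative) cost decreases by at least the stage cost `e₀ᵀ Q e₀` at every step, the
stage costs are summable and tend to zero, and positive definiteness of `Q` gives `e → 0`.
-/
section QuadraticForms

variable {ι : Type*} [Fintype ι]

lemma Matrix.PosSemidef.dotProduct_mulVec_self_nonneg {M : Matrix ι ι ℝ} (hM : M.PosSemidef)
    (v : ι → ℝ) : 0 ≤ v ⬝ᵥ (M *ᵥ v) := by
  simpa using hM.dotProduct_mulVec_nonneg v

lemma Matrix.dotProduct_mulVec_conj (A P : Matrix ι ι ℝ) (v : ι → ℝ) :
    (A *ᵥ v) ⬝ᵥ (P *ᵥ (A *ᵥ v)) = v ⬝ᵥ ((Aᵀ * P * A) *ᵥ v) := by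
  rw [← mulVec_mulVec, ← mulVec_mulVec, dotProduct_mulVec v Aᵀ, vecMul_transpose]

lemma tendsto_zero_of_tendsto_dotProduct_self {α : Type*} {l : Filter α} {v : α → ι → ℝ}
    (hv : Tendsto (fun k => v k ⬝ᵥ v k) l (𝓝 0)) : Tendsto v l (𝓝 0) := by
  have hnorm : Tendsto (fun k => ‖WithLp.toLp 2 (v k)‖) l (𝓝 0) := by
    simpa [EuclideanSpace.norm_eq, dotProduct, ← sq] using hv.sqrt
  simpa [Function.comp_def] using
    ((PiLp.continuous_ofLp 2 _).tendsto 0).comp (tendsto_zero_iff_norm_tendsto_zero.2 hnorm)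

open scoped MatrixOrder in
lemma Matrix.PosDef.tendsto_zero_of_tendsto_dotProduct_mulVec [DecidableEq ι]
    {Q : Matrix ι ι ℝ} (hQ : Q.PosDef) {α : Type*} {l : Filter α} {v : α → ι → ℝ}
    (hv : Tendsto (fun k => v k ⬝ᵥ (Q *ᵥ v k)) l (𝓝 0)) : Tendsto v l (𝓝 0) := by
  obtain ⟨B, rfl⟩ := CStarAlgebra.nonneg_iff_eq_star_mul_self.mp hQ.posSemidef.nonneg
  have hB : IsUnit B.det := by
    have := hQ.det_pos.ne'
    rw [star_eq_conjTranspose, det_mul, det_conjTranspose] at this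
    exact isUnit_iff_ne_zero.2 (right_ne_zero_of_mul this)
  have hBv : Tendsto (fun k => B *ᵥ v k) l (𝓝 0) := by
    refine tendsto_zero_of_tendsto_dotProduct_self ?_
    simpa [star_eq_conjTranspose, conjTranspose_eq_transpose_of_trivial, ← mulVec_mulVec,
      dotProduct_mulVec _ Bᵀ, vecMul_transpose] using hv
  simpa [Function.comp_def, mulVec_mulVec, nonsing_inv_mul B hB] using
    ((Matrix.mulVecLin B⁻¹).continuous_of_finiteDimensional.tendsto 0).comp hBv

end QuadraticForms

lemma tendsto_atTop_zero_of_succ_le_sub {V w : ℕ → ℝ} (hV : ∀ k, 0 ≤ V k) (hw : ∀ k, 0 ≤ w k)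
    (hstep : ∀ k, V (k + 1) ≤ V k - w k) : Tendsto w atTop (𝓝 0) := by
  refine (summable_of_sum_range_le hw (c := V 0) fun k => ?_).tendsto_atTop_zero
  have hsum : ∀ k, ∑ i ∈ Finset.range k, w i ≤ V 0 - V k := by
    intro k
    induction k with
    | zero => simp
    | succ k ih => rw [Finset.sum_range_succ]; linarith [hstep k]
  linarith [hsum k, hV k]

section Shift

lemma shiftSeq_castSucc {m M : ℕ} (U : Fin (M + 1) → Fin m → ℝ) (i : Fin M) :
    shiftSeq U i.castSucc = U i.succ :=
  dif_pos (Nat.succ_lt_succ i.isLt)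

lemma shiftSeq_last {m M : ℕ} (U : Fin (M + 1) → Fin m → ℝ) : shiftSeq U (Fin.last M) = 0 :=
  dif_neg (lt_irrefl _)

variable {n m N : ℕ} (Aq : Matrix (Fin n) (Fin n) ℝ) (Bq : Matrix (Fin n) (Fin m) ℝ)
  (H : Matrix (Fin n) (Fin n) ℝ) (h : ℝ)

lemma refState_succ (r : Fin n → ℝ) (i : ℕ) :
    refState H h r (i + 1) = NormedSpace.exp (h • H) *ᵥ refState H h r i := by
  rw [refState, refState, mulVec_mulVec, pow_succ']

lemma refState_exp_mulVec (r : Fin n → ℝ) (i : ℕ) :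
    refState H h (NormedSpace.exp (h • H) *ᵥ r) i = refState H h r (i + 1) := by
  rw [refState, refState, mulVec_mulVec, pow_succ]

lemma predState_succ_of_le (x : Fin n → ℝ) (U : Fin N → Fin m → ℝ) {i : ℕ} (hi : N ≤ i) :
    predState Aq Bq h x U (i + 1) = Aq *ᵥ predState Aq Bq h x U i := by
  simp [predState, Nat.not_lt.2 hi]

lemma shiftSeq_extend (U : Fin N → Fin m → ℝ) (i : ℕ) :
    (if hi : i < N then shiftSeq U ⟨i, hi⟩ else 0) =
      if hi : i + 1 < N then U ⟨i + 1, hi⟩ else 0 := by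
  unfold shiftSeq
  split_ifs <;> first | rfl | omega

lemma predState_shiftSeq (hN : 0 < N) (x : Fin n → ℝ) (U : Fin N → Fin m → ℝ) (i : ℕ) :
    predState Aq Bq h (Aq *ᵥ x + h • (Bq *ᵥ U ⟨0, hN⟩)) (shiftSeq U) i =
      predState Aq Bq h x U (i + 1) := by
  induction i with
  | zero => simp [predState, hN]
  | succ i ih =>
    rw [predState, ih, shiftSeq_extend]
    rfl

end Shift

lemma mpcCost_shiftSeq {n m N : ℕ} (hN : 0 < N) {h : ℝ} {Aq H : Matrix (Fin n) (Fin n) ℝ}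
    (hA : Aq = NormedSpace.exp (h • H)) (Bq : Matrix (Fin n) (Fin m) ℝ)
    (P Q : Matrix (Fin n) (Fin n) ℝ) (R : Matrix (Fin m) (Fin m) ℝ)
    (x r : Fin n → ℝ) (U : Fin N → Fin m → ℝ) :
    mpcCost Aq Bq H h P Q R (Aq *ᵥ x + h • (Bq *ᵥ U ⟨0, hN⟩))
        (NormedSpace.exp (h • H) *ᵥ r) (shiftSeq U) + (x - r) ⬝ᵥ (Q *ᵥ (x - r)) +
        U ⟨0, hN⟩ ⬝ᵥ (R *ᵥ U ⟨0, hN⟩) =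
      mpcCost Aq Bq H h P Q R x r U +
        (predState Aq Bq h x U N - refState H h r N) ⬝ᵥ
          ((Q - P + Aqᵀ * P * Aq) *ᵥ (predState Aq Bq h x U N - refState H h r N)) := by
  obtain ⟨M, rfl⟩ : ∃ M, N = M + 1 := ⟨N - 1, by omega⟩
  obtain ⟨e, he⟩ : ∃ e : ℕ → Fin n → ℝ,
      ∀ i, predState Aq Bq h x U i - refState H h r i = e i := ⟨_, fun _ => rfl⟩
  have hterminal : e (M + 2) = Aq *ᵥ e (M + 1) := by
    rw [← he, ← he, predState_succ_of_le _ _ _ _ _ le_rfl, refState_succ, ← hA, mulVec_sub]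
  have hinitial : e 0 = x - r := by simp [← he, predState, refState]
  have hshift : mpcCost Aq Bq H h P Q R (Aq *ᵥ x + h • (Bq *ᵥ U ⟨0, hN⟩))
      (NormedSpace.exp (h • H) *ᵥ r) (shiftSeq U) =
        e (M + 1) ⬝ᵥ ((Aqᵀ * P * Aq) *ᵥ e (M + 1)) +
          ∑ i : Fin M, (e (i + 1) ⬝ᵥ (Q *ᵥ e (i + 1)) + U i.succ ⬝ᵥ (R *ᵥ U i.succ)) +
          e (M + 1) ⬝ᵥ (Q *ᵥ e (M + 1)) := by
    rw [mpcCost, Fin.sum_univ_castSucc]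
    simp only [predState_shiftSeq, refState_exp_mulVec, shiftSeq_castSucc, shiftSeq_last, he,
      hterminal, dotProduct_mulVec_conj, Fin.val_castSucc, Fin.val_last, mulVec_zero,
      dotProduct_zero, add_zero]
    ring
  have horig : mpcCost Aq Bq H h P Q R x r U =
      e (M + 1) ⬝ᵥ (P *ᵥ e (M + 1)) + e 0 ⬝ᵥ (Q *ᵥ e 0) + U ⟨0, hN⟩ ⬝ᵥ (R *ᵥ U ⟨0, hN⟩) +
          ∑ i : Fin M, (e (i + 1) ⬝ᵥ (Q *ᵥ e (i + 1)) + U i.succ ⬝ᵥ (R *ᵥ U i.succ)) := by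
    rw [mpcCost, Fin.sum_univ_succ]
    simp only [he, Fin.val_succ, Fin.val_zero, Fin.zero_eta]
    ring
  rw [hshift, horig, ← hinitial, he]
  simp only [add_mulVec, sub_mulVec, dotProduct_add, dotProduct_sub]
  ring

section Cost

variable {n m N : ℕ} {h : ℝ} {Aq H : Matrix (Fin n) (Fin n) ℝ} {Bq : Matrix (Fin n) (Fin m) ℝ}
  {P Q : Matrix (Fin n) (Fin n) ℝ} {R : Matrix (Fin m) (Fin m) ℝ}

lemma mpcCost_nonneg (hP : P.PosSemidef) (hQ : Q.PosSemidef) (hR : R.PosSemidef)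
    (x r : Fin n → ℝ) (U : Fin N → Fin m → ℝ) : 0 ≤ mpcCost Aq Bq H h P Q R x r U :=
  add_nonneg (hP.dotProduct_mulVec_self_nonneg _) <| Finset.sum_nonneg fun _ _ =>
    add_nonneg (hQ.dotProduct_mulVec_self_nonneg _) (hR.dotProduct_mulVec_self_nonneg _)

lemma mpcCost_shiftSeq_le (hN : 0 < N) (hA : Aq = NormedSpace.exp (h • H))
    (hR : R.PosSemidef) (hneg : (-(Q - P + Aqᵀ * P * Aq)).PosSemidef)
    (x r : Fin n → ℝ) (U : Fin N → Fin m → ℝ) :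
    mpcCost Aq Bq H h P Q R (Aq *ᵥ x + h • (Bq *ᵥ U ⟨0, hN⟩))
        (NormedSpace.exp (h • H) *ᵥ r) (shiftSeq U) ≤
      mpcCost Aq Bq H h P Q R x r U - (x - r) ⬝ᵥ (Q *ᵥ (x - r)) := by
  have hcost := mpcCost_shiftSeq hN hA Bq P Q R x r U
  have hinput := hR.dotProduct_mulVec_self_nonneg (U ⟨0, hN⟩)
  have hterminal := hneg.dotProduct_mulVec_self_nonneg
    (predState Aq Bq h x U N - refState H h r N)
  rw [neg_mulVec, dotProduct_neg, neg_nonneg] at hterminal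
  linarith

end Cost

theorem stmt13_general {n m N : ℕ} (hN : 0 < N) (h : ℝ)
    (Aq H : Matrix (Fin n) (Fin n) ℝ) (Bq : Matrix (Fin n) (Fin m) ℝ)
    (P Q : Matrix (Fin n) (Fin n) ℝ) (R : Matrix (Fin m) (Fin m) ℝ)
    (hP : P.PosDef) (hQ : Q.PosDef) (hR : R.PosDef)
    (hA : Aq = NormedSpace.exp (h • H))
    (hneg : (-(Q - P + Aqᵀ * P * Aq)).PosDef)
    (xq r : ℕ → (Fin n → ℝ)) (Utilde : ℕ → (Fin N → Fin m → ℝ))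
    (hx : ∀ k, xq (k + 1) = Aq *ᵥ xq k + h • (Bq *ᵥ Utilde k ⟨0, hN⟩))
    (hr : ∀ k, r (k + 1) = NormedSpace.exp (h • H) *ᵥ r k)
    (hcmp : ∀ k, mpcCost Aq Bq H h P Q R (xq (k + 1)) (r (k + 1)) (Utilde (k + 1)) ≤
      mpcCost Aq Bq H h P Q R (xq (k + 1)) (r (k + 1)) (shiftSeq (Utilde k))) :
    Antitone (fun k => mpcCost Aq Bq H h P Q R (xq k) (r k) (Utilde k)) ∧
      Filter.Tendsto (fun k => xq k - r k) Filter.atTop (nhds 0) := by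
  have hdecrease : ∀ k, mpcCost Aq Bq H h P Q R (xq (k + 1)) (r (k + 1)) (Utilde (k + 1)) ≤
      mpcCost Aq Bq H h P Q R (xq k) (r k) (Utilde k) - (xq k - r k) ⬝ᵥ (Q *ᵥ (xq k - r k)) := by
    intro k
    refine (hcmp k).trans ?_
    rw [hx k, hr k]
    exact mpcCost_shiftSeq_le hN hA hR.posSemidef hneg.posSemidef _ _ _
  have hstage : ∀ k, 0 ≤ (xq k - r k) ⬝ᵥ (Q *ᵥ (xq k - r k)) :=
    fun k => hQ.posSemidef.dotProduct_mulVec_self_nonneg _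
  refine ⟨antitone_nat_of_succ_le fun k => (hdecrease k).trans (sub_le_self _ (hstage k)), ?_⟩
  exact hQ.tendsto_zero_of_tendsto_dotProduct_mulVec <| tendsto_atTop_zero_of_succ_le_sub
    (fun k => mpcCost_nonneg hP.posSemidef hQ.posSemidef hR.posSemidef _ _ _) hstage hdecrease

/-- Theorem 2, Algorithm 1 convergence: if at each step the chosen quantized
sequence does at least as well as the shifted previous sequence, then the cost sequence is
non-increasing and the tracking error converges to zero. -/
theorem stmt13 {n m N : ℕ} (hN : 0 < N) (h : ℝ) (hh : 0 < h)
    (Aq H : Matrix (Fin n) (Fin n) ℝ) (Bq : Matrix (Fin n) (Fin m) ℝ)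
    (P Q : Matrix (Fin n) (Fin n) ℝ) (R : Matrix (Fin m) (Fin m) ℝ)
    (hP : P.PosDef) (hQ : Q.PosDef) (hR : R.PosDef)
    (hA : Aq = NormedSpace.exp (h • H))
    (hneg : (-(Q - P + Aqᵀ * P * Aq)).PosDef)
    (xq r : ℕ → (Fin n → ℝ)) (Utilde : ℕ → (Fin N → Fin m → ℝ))
    (hmem : ∀ k, Utilde k ∈ quantSet m N)
    (hx : ∀ k, xq (k + 1) = Aq *ᵥ xq k + h • (Bq *ᵥ Utilde k ⟨0, hN⟩))
    (hr : ∀ k, r (k + 1) = NormedSpace.exp (h • H) *ᵥ r k)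
    (hcmp : ∀ k, mpcCost Aq Bq H h P Q R (xq (k + 1)) (r (k + 1)) (Utilde (k + 1)) ≤
      mpcCost Aq Bq H h P Q R (xq (k + 1)) (r (k + 1)) (shiftSeq (Utilde k))) :
    Antitone (fun k => mpcCost Aq Bq H h P Q R (xq k) (r k) (Utilde k)) ∧
      Filter.Tendsto (fun k => xq k - r k) Filter.atTop (nhds 0) :=
  stmt13_general hN h Aq H Bq P Q R hP hQ hR hA hneg xq r Utilde hx hr hcmp
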